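/- arXiv:0810.3334 — 2 statements merged into one kernel-verified Lean document; each statement's English description precedes it below -/
import Mathlib

section
/- Let K be a field, V a finite-dimensional K-vector space, p, q ≥ 1, and let (A₁,…,A_{p+1}) ∈ GL(V)^{p+1} be a tuple with A₁⋯A_{p+1} = 1 having property T. Let λ₁,…,λ_q ∈ K^× with λⱼ ≠ 1 for all j. Let F be the free group on generators α₁,…,α_{p+q} and let ρ: F → GL(V) be the homomorphism with ρ(αᵢ) = Aᵢ for i = 1,…,p and ρ(α_{p+j}) = λⱼ·id_V for j = 1,…,q. Then a 1-cocycle δ: F → V satisfies δ([αᵢ, α_{p+j}]) = 0 for all 1 ≤ i ≤ p and 1 ≤ j ≤ q if and only if δ is a 1-coboundary. Consequently, the twisted evaluation map τ sending δ to the tuple (δ([αᵢ, α_{p+j}]))_{1≤i≤p, 1≤j≤q} induces an injective K-linear map H¹(F,V) → V^{pq}. -/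
section Defs

variable {K V : Type*} [Field K] [AddCommGroup V] [Module K V]

/-- A 1-cocycle for the *right* action of `G` on `V` attached to `ρ`
(here `ρ` is an anti-homomorphism of monoids, `v·ρ(g)` being `ρ g v`, so that
`v ↦ v·ρ(g)` is a right action):  δ(αβ) = δ(α)·ρ(β) + δ(β). -/
def IsCocycle {G : Type*} [Group G] (ρ : G → Module.End K V) (δ : G → V) : Prop :=
  ∀ a b : G, δ (a * b) = ρ b (δ a) + δ b

/-- A 1-coboundary: δ(γ) = v·(1 − ρ(γ)) for a fixed v. -/
def IsCoboundary {G : Type*} [Group G] (ρ : G → Module.End K V) (δ : G → V) : Prop :=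
  ∃ v : V, ∀ g : G, δ g = v - ρ g v

/-- The space of 1-cocycles. -/
def cocycles {G : Type*} [Group G] (ρ : G → Module.End K V) : Submodule K (G → V) where
  carrier := {δ | IsCocycle ρ δ}
  add_mem' := by
    intro f g hf hg
    intro a b
    simp only [Pi.add_apply, hf a b, hg a b, map_add]
    abel
  zero_mem' := by intro a b; simp
  smul_mem' := by
    intro c f hf
    intro a b
    simp only [Pi.smul_apply, hf a b, map_smul, smul_add]

/-- The space of 1-coboundaries. -/
def coboundaries {G : Type*} [Group G] (ρ : G → Module.End K V) : Submodule K (G → V) where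
  carrier := {δ | IsCoboundary ρ δ}
  add_mem' := by
    rintro f g ⟨v, hv⟩ ⟨w, hw⟩
    refine ⟨v + w, fun x => ?_⟩
    simp only [Pi.add_apply, hv x, hw x, map_add]
    abel
  zero_mem' := ⟨0, fun g => by simp⟩
  smul_mem' := by
    rintro c f ⟨v, hv⟩
    refine ⟨c • v, fun g => ?_⟩
    simp only [Pi.smul_apply, hv g, map_smul, smul_sub]

/-- The commutator [x,y] := x⁻¹·y⁻¹·x·y. -/
def pcomm {G : Type*} [Group G] (x y : G) : G := x⁻¹ * y⁻¹ * x * y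

/-- Property T for a tuple in GL(V)^{p+1}: the generated subgroup acts irreducibly
and at least two of the first p entries are not the identity. -/
def HasPropertyT {p : ℕ} (A : Fin (p + 1) → (Module.End K V)ˣ) : Prop :=
  (∀ U : Submodule K V, (∀ i, U.map (A i : Module.End K V) = U) → U = ⊥ ∨ U = ⊤) ∧
  ∃ i j : Fin p, i ≠ j ∧ A i.castSucc ≠ 1 ∧ A j.castSucc ≠ 1

end Defs

section Aux

variable {K V : Type*} [Field K] [AddCommGroup V] [Module K V]
variable {G : Type*} [Group G]

lemma delta_one {ρ : G → Module.End K V} (hρ1 : ρ 1 = 1)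
    {δ : G → V} (hδ : IsCocycle ρ δ) : δ 1 = 0 := by
  have h := hδ 1 1
  rw [mul_one, hρ1] at h
  simp only [Module.End.one_apply] at h
  nth_rewrite 1 [← zero_add (δ 1)] at h
  exact (add_right_cancel h).symm

lemma delta_inv {ρ : G → Module.End K V} (hρ1 : ρ 1 = 1)
    {δ : G → V} (hδ : IsCocycle ρ δ) (g : G) :
    δ g⁻¹ = -(ρ g⁻¹ (δ g)) := by
  have h := hδ g g⁻¹
  rw [mul_inv_cancel, delta_one hρ1 hδ] at h
  exact eq_neg_of_add_eq_zero_left (by rw [add_comm]; exact h.symm)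

lemma delta_pcomm {ρ : G → Module.End K V} (hρ1 : ρ 1 = 1)
    (hρmul : ∀ a b, ρ (a * b) = ρ b * ρ a)
    {δ : G → V} (hδ : IsCocycle ρ δ) (x y : G) {c : K} (hc : c ≠ 0)
    (hy : ρ y = c • 1) :
    δ (pcomm x y) = c • δ x - δ x + δ y - ρ x (δ y) := by
  have hinv : ∀ g : G, ρ g * ρ g⁻¹ = 1 := fun g => by
    rw [← hρmul, inv_mul_cancel, hρ1]
  have hyinv : ρ y⁻¹ = c⁻¹ • 1 := by
    have h1 : ρ y⁻¹ * ρ y = 1 := by rw [← hρmul, mul_inv_cancel, hρ1]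
    have h2 : (c • (1 : Module.End K V)) * (c⁻¹ • 1) = 1 := by
      rw [smul_mul_smul_comm, mul_inv_cancel₀ hc, one_mul, one_smul]
    calc ρ y⁻¹ = ρ y⁻¹ * ((c • 1) * (c⁻¹ • 1)) := by rw [h2, mul_one]
      _ = (ρ y⁻¹ * ρ y) * (c⁻¹ • 1) := by rw [← hy, mul_assoc]
      _ = c⁻¹ • 1 := by rw [h1, one_mul]
  have hxx : ρ x (ρ x⁻¹ (δ x)) = δ x := by
    rw [← Module.End.mul_apply, hinv x, Module.End.one_apply]
  rw [pcomm, hδ (x⁻¹ * y⁻¹ * x) y, hδ (x⁻¹ * y⁻¹) x, hδ x⁻¹ y⁻¹,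
    delta_inv hρ1 hδ x, delta_inv hρ1 hδ y, hy, hyinv]
  simp only [LinearMap.smul_apply, Module.End.one_apply, map_neg, map_smul, map_add,
    smul_neg, hxx]
  simp only [smul_add, smul_neg, smul_smul, mul_inv_cancel₀ hc, inv_mul_cancel₀ hc, one_smul, smul_sub]
  abel

lemma fixed_eq_zero {p : ℕ} (A : Fin (p + 1) → (Module.End K V)ˣ)
    (hprod : ((List.ofFn A).reverse).prod = 1)
    (hT : HasPropertyT A) (w : V)
    (hw : ∀ i : Fin p, (A i.castSucc : Module.End K V) w = w) : w = 0 := by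
  have listfix : ∀ (l : List (Module.End K V)ˣ) (u : V),
      (∀ f ∈ l, (f : Module.End K V) u = u) →
      ((l.prod : (Module.End K V)ˣ) : Module.End K V) u = u := by
    intro l
    induction l with
    | nil => intro u _; simp
    | cons f t ih =>
        intro u h
        simp only [List.prod_cons, Units.val_mul, Module.End.mul_apply]
        rw [ih u (fun g hg => h g (List.mem_cons_of_mem f hg)), h f (List.mem_cons_self (a := f) (l := t))]
  have hall : ∀ u : V, (∀ i : Fin p, (A i.castSucc : Module.End K V) u = u) →
      ∀ k : Fin (p + 1), (A k : Module.End K V) u = u := by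
    intro u hu k
    refine Fin.lastCases ?_ (fun i => hu i) k
    have hsplit : List.ofFn A =
        (List.ofFn fun i : Fin p => A i.castSucc) ++ [A (Fin.last p)] := by
      rw [List.ofFn_succ']
      simp [List.concat_eq_append]
    have hpr := hprod
    rw [hsplit, List.reverse_append, List.reverse_singleton, List.singleton_append,
      List.prod_cons] at hpr
    set R := ((List.ofFn fun i : Fin p => A i.castSucc).reverse).prod with hR
    have hru : ((R : (Module.End K V)ˣ) : Module.End K V) u = u := by
      apply listfix
      intro f hf
      rw [List.mem_reverse, List.mem_ofFn] at hf
      obtain ⟨i, rfl⟩ := hf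
      exact hu i
    have h2 : ((A (Fin.last p) * R : (Module.End K V)ˣ) : Module.End K V) u = u := by
      rw [hpr]; simp
    rw [Units.val_mul, Module.End.mul_apply, hru] at h2
    exact h2
  set W : Submodule K V :=
    { carrier := {u | ∀ i : Fin p, (A i.castSucc : Module.End K V) u = u}
      add_mem' := fun ha hb i => by
        rw [map_add, ha i, hb i]
      zero_mem' := fun i => by simp
      smul_mem' := fun c u hu i => by rw [map_smul, hu i] } with hWdef
  have hmemW : ∀ u : V, u ∈ W ↔ ∀ i : Fin p, (A i.castSucc : Module.End K V) u = u :=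
    fun u => Iff.rfl
  have hWmap : ∀ k, W.map (A k : Module.End K V) = W := by
    intro k
    apply le_antisymm
    · rintro _ ⟨u, hu, rfl⟩
      rw [hall u hu k]
      exact hu
    · intro u hu
      exact ⟨u, hu, hall u hu k⟩
  rcases hT.1 W hWmap with hbot | htop
  · have hwW : w ∈ W := hw
    rw [hbot] at hwW
    simpa using hwW
  · exfalso
    obtain ⟨i, j, _, hi, _⟩ := hT.2
    apply hi
    apply Units.ext
    ext u
    have huW : u ∈ W := by rw [htop]; trivial
    simpa using huW i

lemma cocycle_eq_coboundary {ι : Type*} {ρ : FreeGroup ι → Module.End K V}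
    (hρ1 : ρ 1 = 1) (hρmul : ∀ a b, ρ (a * b) = ρ b * ρ a)
    {δ : FreeGroup ι → V} (hδ : IsCocycle ρ δ) (v : V)
    (hgen : ∀ x : ι, δ (FreeGroup.of x) = v - ρ (FreeGroup.of x) v) :
    ∀ g, δ g = v - ρ g v := by
  intro g
  induction g using FreeGroup.induction_on with
  | C1 => rw [delta_one hρ1 hδ, hρ1]; simp
  | of x => exact hgen x
  | inv_of x hx =>
      show δ (FreeGroup.of x)⁻¹ = v - ρ (FreeGroup.of x)⁻¹ v
      rw [delta_inv hρ1 hδ, hgen x]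
      have h1 : ρ (FreeGroup.of x)⁻¹ (ρ (FreeGroup.of x) v) = v := by
        rw [← Module.End.mul_apply, ← hρmul, mul_inv_cancel, hρ1, Module.End.one_apply]
      rw [map_sub, h1, neg_sub]
  | mul x y hx hy =>
      rw [hδ x y, hx, hy, hρmul, map_sub, Module.End.mul_apply]
      abel

end Aux

theorem statement0 {K V : Type*} [Field K] [AddCommGroup V] [Module K V]
    [FiniteDimensional K V] {p q : ℕ} (hp : 1 ≤ p) (hq : 1 ≤ q)
    (A : Fin (p + 1) → (Module.End K V)ˣ)
    (hprod : ((List.ofFn A).reverse).prod = 1)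
    (hT : HasPropertyT A)
    (lam : Fin q → Kˣ) (hlam : ∀ j, (lam j : K) ≠ 1)
    (ρ : FreeGroup (Fin (p + q)) → Module.End K V)
    (hρ1 : ρ 1 = 1)
    (hρmul : ∀ a b, ρ (a * b) = ρ b * ρ a)
    (hρA : ∀ i : Fin p, ρ (FreeGroup.of (Fin.castAdd q i)) = (A i.castSucc : Module.End K V))
    (hρlam : ∀ j : Fin q, ρ (FreeGroup.of (Fin.natAdd p j)) = (lam j : K) • 1) :
    -- (1): a cocycle vanishes on all commutators [αᵢ, α_{p+j}] iff it is a coboundary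
    (∀ δ : FreeGroup (Fin (p + q)) → V, IsCocycle ρ δ →
      ((∀ (i : Fin p) (j : Fin q),
          δ (pcomm (FreeGroup.of (Fin.castAdd q i)) (FreeGroup.of (Fin.natAdd p j))) = 0)
        ↔ IsCoboundary ρ δ)) ∧
    -- (2): hence the twisted evaluation map induces an injective K-linear map
    -- H¹(F,V) → V^{pq}
    ∃ τ : (↥(cocycles ρ) ⧸ ((coboundaries ρ).comap (cocycles ρ).subtype)) →ₗ[K]
        (Fin p → Fin q → V),
      Function.Injective τ ∧
      ∀ δ : ↥(cocycles ρ),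
        τ (Submodule.Quotient.mk δ) = fun i j =>
          (δ : FreeGroup (Fin (p + q)) → V)
            (pcomm (FreeGroup.of (Fin.castAdd q i)) (FreeGroup.of (Fin.natAdd p j))) := by
  classical
  have h1 : ∀ δ : FreeGroup (Fin (p + q)) → V, IsCocycle ρ δ →
      ((∀ (i : Fin p) (j : Fin q),
          δ (pcomm (FreeGroup.of (Fin.castAdd q i)) (FreeGroup.of (Fin.natAdd p j))) = 0)
        ↔ IsCoboundary ρ δ) := by
    intro δ hδ
    constructor
    · intro hvan
      set j0 : Fin q := ⟨0, hq⟩ with hj0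
      set c0 : K := (lam j0 : K) with hc0
      have h1c0 : (1 : K) - c0 ≠ 0 := sub_ne_zero.mpr (Ne.symm (hlam j0))
      set v : V := ((1 : K) - c0)⁻¹ • δ (FreeGroup.of (Fin.natAdd p j0)) with hv
      have hb0 : δ (FreeGroup.of (Fin.natAdd p j0)) = ((1 : K) - c0) • v := by
        rw [hv, smul_smul, mul_inv_cancel₀ h1c0, one_smul]
      have ha : ∀ i : Fin p, δ (FreeGroup.of (Fin.castAdd q i)) =
          v - (A i.castSucc : Module.End K V) v := by
        intro i
        have hk := hvan i j0
        rw [delta_pcomm hρ1 hρmul hδ _ _ (lam j0).ne_zero (hρlam j0), hρA i, hb0] at hk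
        have hk2 : ((1 : K) - c0) • δ (FreeGroup.of (Fin.castAdd q i)) =
            ((1 : K) - c0) • (v - (A i.castSucc : Module.End K V) v) := by
          rw [map_smul] at hk
          linear_combination (norm := module) (-1 : K) • hk
        exact smul_right_injective V h1c0 hk2
      have hb : ∀ j : Fin q, δ (FreeGroup.of (Fin.natAdd p j)) = v - (lam j : K) • v := by
        intro j
        set w : V := δ (FreeGroup.of (Fin.natAdd p j)) - ((1 : K) - (lam j : K)) • v with hw
        have hwfix : ∀ i : Fin p, (A i.castSucc : Module.End K V) w = w := by
          intro i
          have hk := hvan i j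
          rw [delta_pcomm hρ1 hρmul hδ _ _ (lam j).ne_zero (hρlam j), hρA i, ha i] at hk
          rw [hw, map_sub, map_smul]
          linear_combination (norm := module) (-1 : K) • hk
        have hw0 : w = 0 := fixed_eq_zero A hprod hT w hwfix
        have : δ (FreeGroup.of (Fin.natAdd p j)) = ((1 : K) - (lam j : K)) • v := by
          have := sub_eq_zero.mp (hw ▸ hw0)
          exact this
        rw [this, sub_smul, one_smul]
      refine ⟨v, cocycle_eq_coboundary hρ1 hρmul hδ v ?_⟩
      intro x
      refine Fin.addCases (fun i => ?_) (fun j => ?_) x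
      · rw [hρA i]; exact ha i
      · rw [hρlam j]
        simp only [LinearMap.smul_apply, Module.End.one_apply]
        exact hb j
    · rintro ⟨v, hvv⟩ i j
      rw [delta_pcomm hρ1 hρmul hδ _ _ (lam j).ne_zero (hρlam j), hρA i,
        hvv (FreeGroup.of (Fin.castAdd q i)), hvv (FreeGroup.of (Fin.natAdd p j)),
        hρA i, hρlam j]
      simp only [LinearMap.smul_apply, Module.End.one_apply, map_sub, map_smul]
      module
  refine ⟨h1, ?_⟩
  set T : ↥(cocycles ρ) →ₗ[K] (Fin p → Fin q → V) :=
    { toFun := fun δ => fun i j => (δ : FreeGroup (Fin (p + q)) → V)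
        (pcomm (FreeGroup.of (Fin.castAdd q i)) (FreeGroup.of (Fin.natAdd p j)))
      map_add' := fun δ ε => rfl
      map_smul' := fun c δ => rfl } with hT'
  have hker : LinearMap.ker T = (coboundaries ρ).comap (cocycles ρ).subtype := by
    ext δ
    constructor
    · intro h
      exact (h1 δ δ.2).mp (fun i j => congrFun (congrFun h i) j)
    · intro h
      funext i j
      exact (h1 δ δ.2).mpr h i j
  refine ⟨Submodule.liftQ _ T (le_of_eq hker.symm), ?_, fun δ => rfl⟩
  rw [← LinearMap.ker_eq_bot]
  exact Submodule.ker_liftQ_eq_bot _ _ _ (le_of_eq hker)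
end

section
/- Let K be a field, V a finite-dimensional K-vector space, A₁,…,A_p ∈ GL(V), and λ ∈ K^×. Let F be the free group on generators α₁,…,α_{p+1} and let ρ: F → GL(V) be the homomorphism with ρ(α_m) = A_m for m = 1,…,p and ρ(α_{p+1}) = λ·id_V. Then for every 1-cocycle δ: F → V and every fixed i with 1 ≤ i ≤ p, the following identities hold: (a) for every m < i: δ([α_m, α_{p+1}^{αᵢα_{p+1}}]) = δ([αᵢ, α_{p+1}])·λ(A_m − 1) + δ([α_m, α_{p+1}]); (b) δ([αᵢ^{α_{p+1}}, α_{p+1}^{αᵢα_{p+1}}]) = δ([αᵢ, α_{p+1}])·λAᵢ; (c) for every m with i < m ≤ p: δ([α_m^{[αᵢ,α_{p+1}]}, α_{p+1}^{αᵢα_{p+1}}]) = δ([αᵢ, α_{p+1}])·(A_m − 1) + δ([α_m, α_{p+1}]). -/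
section Defs

variable {K V : Type*} [Field K] [AddCommGroup V] [Module K V]

/-- The conjugate x^y := y⁻¹·x·y. -/
def pconj {G : Type*} [Group G] (x y : G) : G := y⁻¹ * x * y

end Defs

theorem statement5 {K V : Type*} [Field K] [AddCommGroup V] [Module K V]
    [FiniteDimensional K V] {p : ℕ}
    (A : Fin p → (Module.End K V)ˣ) (lam : Kˣ)
    (ρ : FreeGroup (Fin (p + 1)) → Module.End K V)
    (hρ1 : ρ 1 = 1)
    (hρmul : ∀ a b, ρ (a * b) = ρ b * ρ a)
    (hρA : ∀ m : Fin p, ρ (FreeGroup.of m.castSucc) = (A m : Module.End K V))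
    (hρlam : ρ (FreeGroup.of (Fin.last p)) = (lam : K) • 1)
    (δ : FreeGroup (Fin (p + 1)) → V) (hδ : IsCocycle ρ δ) (i : Fin p) :
    -- (a): for m < i
    (∀ m : Fin p, (m : ℕ) < (i : ℕ) →
      δ (pcomm (FreeGroup.of m.castSucc)
          (pconj (FreeGroup.of (Fin.last p))
            (FreeGroup.of i.castSucc * FreeGroup.of (Fin.last p))))
        = ((lam : K) • ((A m : Module.End K V) - 1))
            (δ (pcomm (FreeGroup.of i.castSucc) (FreeGroup.of (Fin.last p))))
          + δ (pcomm (FreeGroup.of m.castSucc) (FreeGroup.of (Fin.last p)))) ∧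
    -- (b): m = i
    (δ (pcomm (pconj (FreeGroup.of i.castSucc) (FreeGroup.of (Fin.last p)))
        (pconj (FreeGroup.of (Fin.last p))
          (FreeGroup.of i.castSucc * FreeGroup.of (Fin.last p))))
      = ((lam : K) • (A i : Module.End K V))
          (δ (pcomm (FreeGroup.of i.castSucc) (FreeGroup.of (Fin.last p))))) ∧
    -- (c): for i < m ≤ p
    (∀ m : Fin p, (i : ℕ) < (m : ℕ) →
      δ (pcomm (pconj (FreeGroup.of m.castSucc)
            (pcomm (FreeGroup.of i.castSucc) (FreeGroup.of (Fin.last p))))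
          (pconj (FreeGroup.of (Fin.last p))
            (FreeGroup.of i.castSucc * FreeGroup.of (Fin.last p))))
        = ((A m : Module.End K V) - 1)
            (δ (pcomm (FreeGroup.of i.castSucc) (FreeGroup.of (Fin.last p))))
          + δ (pcomm (FreeGroup.of m.castSucc) (FreeGroup.of (Fin.last p)))) := by

  have hd : ∀ a b : FreeGroup (Fin (p + 1)), δ (a * b) = ρ b (δ a) + δ b := hδ
  have hδ1 : δ 1 = 0 := by
    have h := hd 1 1
    rw [mul_one, hρ1, Module.End.one_apply] at h
    exact (right_eq_add.mp h)
  have hρinv : ∀ x, ρ x * ρ x⁻¹ = 1 := by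
    intro x; rw [← hρmul x⁻¹ x, inv_mul_cancel x, hρ1]
  have hδinv : ∀ x, δ x⁻¹ = -(ρ x⁻¹ (δ x)) := by
    intro x
    have h := hd x x⁻¹
    rw [mul_inv_cancel, hδ1] at h
    exact (eq_neg_of_add_eq_zero_right h.symm)
  have htinv : ρ (FreeGroup.of (Fin.last p))⁻¹ = ((lam⁻¹ : Kˣ) : K) • 1 := by
    have h := hρinv (FreeGroup.of (Fin.last p))
    rw [hρlam, smul_mul_assoc, one_mul] at h
    calc ρ (FreeGroup.of (Fin.last p))⁻¹
        = ((lam⁻¹ : Kˣ) : K) • ((lam : K) • ρ (FreeGroup.of (Fin.last p))⁻¹) := by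
          rw [smul_smul, Units.val_inv_eq_inv_val, inv_mul_cancel₀ (Units.ne_zero lam), one_smul]
      _ = ((lam⁻¹ : Kˣ) : K) • 1 := by rw [h]
  have hAinv : ∀ m : Fin p,
      ρ (FreeGroup.of m.castSucc)⁻¹ = (((A m)⁻¹ : (Module.End K V)ˣ) : Module.End K V) := by
    intro m
    refine (Units.inv_eq_of_mul_eq_one_right ?_).symm
    rw [← hρA m]; exact hρinv _
  have hcan1 : ∀ (m : Fin p) (v : V),
      (A m : Module.End K V) ((((A m)⁻¹ : (Module.End K V)ˣ) : Module.End K V) v) = v := by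
    intro m v; rw [← Module.End.mul_apply, Units.mul_inv, Module.End.one_apply]
  have hcan2 : ∀ (m : Fin p) (v : V),
      (((A m)⁻¹ : (Module.End K V)ˣ) : Module.End K V) ((A m : Module.End K V) v) = v := by
    intro m v; rw [← Module.End.mul_apply, Units.inv_mul, Module.End.one_apply]
  have hln : (lam : K) ≠ 0 := Units.ne_zero lam
  refine ⟨?_, ?_, ?_⟩
  · intro m _
    simp only [pcomm, pconj, mul_inv_rev, inv_inv, mul_assoc, hd, hδinv, hρmul, hρA, hρlam,
      htinv, hAinv, hρ1, Module.End.mul_apply, LinearMap.add_apply, LinearMap.smul_apply,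
      Module.End.one_apply, LinearMap.sub_apply, map_add, map_smul, map_neg, map_sub,
      hcan1, hcan2, smul_neg, smul_add, neg_neg, smul_smul]
    match_scalars <;> (try simp only [Units.val_inv_eq_inv_val]) <;> (try field_simp) <;> (try ring)
  · simp only [pcomm, pconj, mul_inv_rev, inv_inv, mul_assoc, hd, hδinv, hρmul, hρA, hρlam,
      htinv, hAinv, hρ1, Module.End.mul_apply, LinearMap.add_apply, LinearMap.smul_apply,
      Module.End.one_apply, LinearMap.sub_apply, map_add, map_smul, map_neg, map_sub,
      hcan1, hcan2, smul_neg, smul_add, neg_neg, smul_smul]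
    match_scalars <;> (try simp only [Units.val_inv_eq_inv_val]) <;> (try field_simp) <;> (try ring)
  · intro m _
    simp only [pcomm, pconj, mul_inv_rev, inv_inv, mul_assoc, hd, hδinv, hρmul, hρA, hρlam,
      htinv, hAinv, hρ1, Module.End.mul_apply, LinearMap.add_apply, LinearMap.smul_apply,
      Module.End.one_apply, LinearMap.sub_apply, map_add, map_smul, map_neg, map_sub,
      hcan1, hcan2, smul_neg, smul_add, neg_neg, smul_smul]
    match_scalars <;> (try simp only [Units.val_inv_eq_inv_val]) <;> (try field_simp) <;> (try ring)
end
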